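/- Let C be a conjugation on H. A map φ : S_C → S_C is a Jordan automorphism of S_C if and only if there exists a unitary operator V ∈ B(H) with C V = V C such that φ(X) = V X V* for all X ∈ S_C. -/

import Mathlib

/-!
Write `[u, v] = ⟪C u, v⟫` (a symmetric complex bilinear form) and `a ⊗ b` for `z ↦ [b, z] a`.
Then `S_C` is the set of operators symmetric for `[·, ·]`, and the nonzero `T ∈ S_C` with
`T S_C T ⊆ ℂ T` are exactly the `u ⊗ u`, `u ≠ 0`. A Jordan automorphism preserves
`X Z X = 2 X ∘ (X ∘ Z) - (X ∘ X) ∘ Z`, hence permutes these rank-one operators. Fix `x₀` with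
`C x₀ = x₀`, `[x₀, x₀] = 1`, and `φ (x₀ ⊗ x₀) = y₀ ⊗ y₀`; the linear map
`V u = φ (u ⊗ x₀ + x₀ ⊗ u) y₀ - [u, x₀] y₀` satisfies `φ (u ⊗ u) = V u ⊗ V u`. Comparing
`φ ((u ⊗ u)²)` with `(V u ⊗ V u)²` shows that `V` preserves `[·, ·]`, and `φ (X*) = φ X*` shows
that `V` commutes with `C`; so `V` preserves the inner product, and it is onto because `φ` is,
hence unitary. Finally `D = φ X - V X V*` lies in `S_C`, and sandwiching `X` between rank-one
operators gives `[w, D w] = 0` for all `w`, so `D = 0`.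
-/

def IsConjugation {H : Type*} [NormedAddCommGroup H] [InnerProductSpace ℂ H]
    (C : H → H) : Prop :=
  (∀ x y, C (x + y) = C x + C y) ∧
  (∀ (a : ℂ) (x : H), C (a • x) = (starRingEnd ℂ a) • C x) ∧
  (∀ x, C (C x) = x) ∧
  (∀ x y : H, (inner ℂ (C x) (C y) : ℂ) = inner ℂ y x)

/-- The set `S_C` of `C`-symmetric bounded operators: `C T C = T*`. -/
def SC {H : Type*} [NormedAddCommGroup H] [InnerProductSpace ℂ H] [CompleteSpace H]
    (C : H → H) : Set (H →L[ℂ] H) :=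
  {T | ∀ x : H, C (T (C x)) = ContinuousLinearMap.adjoint T x}

/-- The Jordan product `A ∘ B = (AB + BA)/2`. -/
noncomputable def jmul {H : Type*} [NormedAddCommGroup H] [InnerProductSpace ℂ H]
    [CompleteSpace H] (A B : H →L[ℂ] H) : H →L[ℂ] H :=
  (2 : ℂ)⁻¹ • (A * B + B * A)

/-- A Jordan automorphism of `S_C` (encoded by a map of `B(H)` whose behaviour on
`S_C` is what matters): a bijection of `S_C` onto itself which is linear on `S_C`,
preserves adjoints and the Jordan product. -/
def IsJordanAutoOf {H : Type*} [NormedAddCommGroup H] [InnerProductSpace ℂ H]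
    [CompleteSpace H] (C : H → H) (φ : (H →L[ℂ] H) → (H →L[ℂ] H)) : Prop :=
  Set.BijOn φ (SC C) (SC C) ∧
  (∀ X ∈ SC C, ∀ Y ∈ SC C, ∀ a b : ℂ, φ (a • X + b • Y) = a • φ X + b • φ Y) ∧
  (∀ X ∈ SC C, φ (star X) = star (φ X)) ∧
  (∀ X ∈ SC C, ∀ Y ∈ SC C, φ (jmul X Y) = jmul (φ X) (φ Y))

open ContinuousLinearMap
open scoped InnerProductSpace

namespace IsConjugation

variable {H : Type*} [NormedAddCommGroup H] [InnerProductSpace ℂ H] {C : H → H}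

lemma map_add (hC : IsConjugation C) (x y : H) : C (x + y) = C x + C y := hC.1 x y

lemma map_smul (hC : IsConjugation C) (a : ℂ) (x : H) : C (a • x) = starRingEnd ℂ a • C x :=
  hC.2.1 a x

lemma apply_apply (hC : IsConjugation C) (x : H) : C (C x) = x := hC.2.2.1 x

lemma inner_map_map (hC : IsConjugation C) (x y : H) : ⟪C x, C y⟫_ℂ = ⟪y, x⟫_ℂ := hC.2.2.2 x y

lemma map_zero (hC : IsConjugation C) : C 0 = 0 := by
  simpa using hC.map_smul 0 0

lemma map_sub (hC : IsConjugation C) (x y : H) : C (x - y) = C x - C y := by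
  rw [eq_sub_iff_add_eq, ← hC.map_add, sub_add_cancel]

end IsConjugation

section ConjForm

variable {H : Type*} [NormedAddCommGroup H] [InnerProductSpace ℂ H] {C : H → H}

noncomputable def conjForm (C : H → H) (u v : H) : ℂ := ⟪C u, v⟫_ℂ

lemma conjForm_comm (hC : IsConjugation C) (u v : H) : conjForm C u v = conjForm C v u := by
  rw [conjForm, conjForm, ← hC.inner_map_map, hC.apply_apply]

lemma conjForm_add_left (hC : IsConjugation C) (u u' v : H) :
    conjForm C (u + u') v = conjForm C u v + conjForm C u' v := by
  rw [conjForm, hC.map_add, inner_add_left]; rfl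

lemma conjForm_smul_left (hC : IsConjugation C) (a : ℂ) (u v : H) :
    conjForm C (a • u) v = a * conjForm C u v := by
  rw [conjForm, hC.map_smul, inner_smul_left, Complex.conj_conj]; rfl

lemma conjForm_sub_left (hC : IsConjugation C) (u u' v : H) :
    conjForm C (u - u') v = conjForm C u v - conjForm C u' v := by
  rw [conjForm, hC.map_sub, inner_sub_left]; rfl

lemma conjForm_zero_left (hC : IsConjugation C) (v : H) : conjForm C 0 v = 0 := by
  rw [conjForm, hC.map_zero, inner_zero_left]

lemma conjForm_add_right (u v v' : H) :
    conjForm C u (v + v') = conjForm C u v + conjForm C u v' := inner_add_right _ _ _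

lemma conjForm_smul_right (a : ℂ) (u v : H) : conjForm C u (a • v) = a * conjForm C u v :=
  inner_smul_right _ _ _

lemma conjForm_sub_right (u v v' : H) :
    conjForm C u (v - v') = conjForm C u v - conjForm C u v' := inner_sub_right _ _ _

lemma conjForm_map_map (hC : IsConjugation C) (u v : H) :
    conjForm C (C u) (C v) = starRingEnd ℂ (conjForm C u v) := by
  rw [conjForm, conjForm, hC.apply_apply, ← hC.inner_map_map v, hC.apply_apply,
    inner_conj_symm]

lemma conjForm_self_map (hC : IsConjugation C) (u : H) : conjForm C u (C u) = ⟪u, u⟫_ℂ :=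
  hC.inner_map_map u u

lemma conjForm_self_map_ne_zero (hC : IsConjugation C) {u : H} (hu : u ≠ 0) :
    conjForm C u (C u) ≠ 0 := by
  rwa [conjForm_self_map hC, inner_self_ne_zero]

lemma exists_conjForm_self_eq_one [Nontrivial H] (hC : IsConjugation C) :
    ∃ x : H, C x = x ∧ conjForm C x x = 1 := by
  obtain ⟨z, hz⟩ := exists_ne (0 : H)
  -- `z + C z` or `i z` is a nonzero fixed point of `C`
  obtain ⟨w, hw, hwC⟩ : ∃ w : H, w ≠ 0 ∧ C w = w := by
    by_cases h : z + C z = 0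
    · refine ⟨Complex.I • z, smul_ne_zero Complex.I_ne_zero hz, ?_⟩
      rw [hC.map_smul, eq_neg_of_add_eq_zero_right h, Complex.conj_I, smul_neg, neg_smul, neg_neg]
    · exact ⟨z + C z, h, by rw [hC.map_add, hC.apply_apply, add_comm]⟩
  refine ⟨((‖w‖⁻¹ : ℝ) : ℂ) • w, by rw [hC.map_smul, hwC, Complex.conj_ofReal], ?_⟩
  rw [conjForm_smul_left hC, conjForm_smul_right, conjForm, hwC, inner_self_eq_norm_sq_to_K]
  have : (‖w‖ : ℂ) ≠ 0 := by exact_mod_cast norm_ne_zero_iff.2 hw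
  push_cast
  field_simp
  rfl

end ConjForm

section SymmetricOperators

variable {H : Type*} [NormedAddCommGroup H] [InnerProductSpace ℂ H] [CompleteSpace H]
  {C : H → H}

lemma mem_SC_iff (hC : IsConjugation C) {X : H →L[ℂ] H} :
    X ∈ SC C ↔ ∀ u v, conjForm C (X u) v = conjForm C u (X v) := by
  refine ⟨fun hX u v ↦ ?_, fun h x ↦ ext_inner_right ℂ fun y ↦ ?_⟩
  · rw [conjForm, ← hC.apply_apply u, hX, adjoint_inner_left, hC.apply_apply]; rfl
  · rw [adjoint_inner_left, ← conjForm, h, conjForm, hC.apply_apply]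

lemma SC_map_apply (hC : IsConjugation C) {X : H →L[ℂ] H} (hX : X ∈ SC C) (x : H) :
    C (X x) = star X (C x) := by
  rw [star_eq_adjoint, ← hX, hC.apply_apply]

lemma zero_mem_SC (hC : IsConjugation C) : (0 : H →L[ℂ] H) ∈ SC C :=
  (mem_SC_iff hC).2 fun u v ↦ by simp [conjForm, hC.map_zero]

lemma smul_add_smul_mem_SC (hC : IsConjugation C) {X Y : H →L[ℂ] H} (hX : X ∈ SC C)
    (hY : Y ∈ SC C) (a b : ℂ) : a • X + b • Y ∈ SC C := by
  rw [mem_SC_iff hC] at *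
  intro u v
  simp only [add_apply, smul_apply, conjForm_add_left hC, conjForm_smul_left hC,
    conjForm_add_right, conjForm_smul_right, hX, hY]

lemma smul_mem_SC (hC : IsConjugation C) {X : H →L[ℂ] H} (hX : X ∈ SC C) (a : ℂ) :
    a • X ∈ SC C := by
  simpa using smul_add_smul_mem_SC hC hX hX a 0

lemma sub_mem_SC (hC : IsConjugation C) {X Y : H →L[ℂ] H} (hX : X ∈ SC C) (hY : Y ∈ SC C) :
    X - Y ∈ SC C := by
  simpa [sub_eq_add_neg] using smul_add_smul_mem_SC hC hX hY 1 (-1)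

lemma mul_mul_mem_SC (hC : IsConjugation C) {X Y : H →L[ℂ] H} (hX : X ∈ SC C)
    (hY : Y ∈ SC C) : X * Y * X ∈ SC C := by
  rw [mem_SC_iff hC] at *
  intro u v
  simp only [mul_apply_eq_comp, hX, hY]

lemma jmul_mem_SC (hC : IsConjugation C) {X Y : H →L[ℂ] H} (hX : X ∈ SC C)
    (hY : Y ∈ SC C) : jmul X Y ∈ SC C := by
  rw [mem_SC_iff hC] at *
  intro u v
  simp only [jmul, smul_apply, add_apply, mul_apply_eq_comp, conjForm_smul_left hC,
    conjForm_add_left hC, conjForm_smul_right, conjForm_add_right, hX, hY, add_comm]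

lemma star_mem_SC (hC : IsConjugation C) {X : H →L[ℂ] H} (hX : X ∈ SC C) : star X ∈ SC C := by
  intro x
  rw [← star_eq_adjoint, star_star, ← SC_map_apply hC hX, hC.apply_apply]

lemma conj_mem_SC (hC : IsConjugation C) {V X : H →L[ℂ] H} (hV : ∀ x, C (V x) = V (C x))
    (hV' : ∀ x, C (star V x) = star V (C x)) (hX : X ∈ SC C) : V * X * star V ∈ SC C := by
  intro x
  simp only [mul_apply_eq_comp]
  rw [hV, SC_map_apply hC hX, ← hV', hC.apply_apply]
  simp only [star_eq_adjoint, adjoint_comp, adjoint_adjoint, mul_def, comp_apply]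

lemma eq_zero_of_conjForm_apply_self (hC : IsConjugation C) {D : H →L[ℂ] H} (hD : D ∈ SC C)
    (h : ∀ w, conjForm C w (D w) = 0) : D = 0 := by
  have hpolar : ∀ w z, conjForm C w (D z) = 0 := fun w z ↦ by
    have := h (w + z)
    rw [map_add, conjForm_add_left hC, conjForm_add_right, conjForm_add_right, h w, h z,
      ← (mem_SC_iff hC).1 hD z w, conjForm_comm hC (D z)] at this
    linear_combination this / 2
  ext z
  simpa [conjForm, hC.apply_apply] using hpolar (C (D z)) z

end SymmetricOperators

section JordanProduct

variable {H : Type*} [NormedAddCommGroup H] [InnerProductSpace ℂ H] [CompleteSpace H]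

lemma jmul_self (X : H →L[ℂ] H) : jmul X X = X * X := by
  rw [jmul, ← two_smul ℂ, smul_smul, inv_mul_cancel₀ two_ne_zero, one_smul]

lemma two_smul_jmul_jmul_sub (X Z : H →L[ℂ] H) :
    (2 : ℂ) • jmul X (jmul X Z) - jmul (jmul X X) Z = X * Z * X := by
  simp only [jmul, smul_add, mul_smul_comm, smul_mul_assoc, smul_smul, mul_add, add_mul,
    mul_assoc]
  module

end JordanProduct

section OuterProducts

variable {H : Type*} [NormedAddCommGroup H] [InnerProductSpace ℂ H]
  {C : H → H}

/-- `a ⊗ b` -/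
noncomputable def conjOuter (C : H → H) (a b : H) : H →L[ℂ] H :=
  (innerSL ℂ (C b)).smulRight a

noncomputable def rankOne (C : H → H) (a : H) : H →L[ℂ] H := conjOuter C a a

noncomputable def symmOuter (C : H → H) (a b : H) : H →L[ℂ] H :=
  conjOuter C a b + conjOuter C b a

lemma conjOuter_apply (a b z : H) : conjOuter C a b z = conjForm C b z • a := rfl

lemma rankOne_apply (a z : H) : rankOne C a z = conjForm C a z • a := rfl

lemma symmOuter_apply (a b z : H) :
    symmOuter C a b z = conjForm C b z • a + conjForm C a z • b := rfl

lemma symmOuter_add_left (hC : IsConjugation C) (a a' b : H) :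
    symmOuter C (a + a') b = symmOuter C a b + symmOuter C a' b := by
  ext z
  simp only [symmOuter_apply, add_apply, conjForm_add_left hC, add_smul, smul_add]
  abel

lemma symmOuter_smul_left (hC : IsConjugation C) (c : ℂ) (a b : H) :
    symmOuter C (c • a) b = c • symmOuter C a b := by
  ext z
  simp only [symmOuter_apply, smul_apply, conjForm_smul_left hC, smul_add, smul_smul,
    mul_comm c]

lemma symmOuter_self (a : H) : symmOuter C a a = (2 : ℂ) • rankOne C a := by
  rw [symmOuter, two_smul]; rfl

lemma rankOne_smul (hC : IsConjugation C) (c : ℂ) (a : H) :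
    rankOne C (c • a) = c ^ 2 • rankOne C a := by
  ext z
  simp only [rankOne_apply, smul_apply, conjForm_smul_left hC, smul_smul]
  ring_nf

lemma rankOne_ne_zero (hC : IsConjugation C) {a : H} (ha : a ≠ 0) : rankOne C a ≠ 0 :=
  fun h ↦ smul_ne_zero (conjForm_self_map_ne_zero hC ha) ha <| by
    rw [← rankOne_apply, h, zero_apply]

lemma eq_or_eq_neg_of_rankOne_eq (hC : IsConjugation C) {a b : H} (ha : a ≠ 0)
    (h : rankOne C a = rankOne C b) : b = a ∨ b = -a := by
  have e : conjForm C a (C a) • a = conjForm C b (C a) • b := by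
    rw [← rankOne_apply, h, rankOne_apply]
  have hb : conjForm C b (C a) ≠ 0 := fun h0 ↦ by
    rw [h0, zero_smul] at e
    exact smul_ne_zero (conjForm_self_map_ne_zero hC ha) ha e
  set μ := (conjForm C b (C a))⁻¹ * conjForm C a (C a)
  have hμ : b = μ • a := by rw [mul_smul, e, inv_smul_smul₀ hb]
  have hμ2 : μ * μ = 1 := by
    refine smul_left_injective ℂ (rankOne_ne_zero hC ha) ?_
    simp only
    rw [one_smul, ← sq, ← rankOne_smul hC, ← hμ, h]
  rcases mul_self_eq_one_iff.1 hμ2 with h1 | h1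
  · left; rw [hμ, h1, one_smul]
  · right; rw [hμ, h1, neg_one_smul]

lemma rankOne_mul_mul_rankOne (a : H) (X : H →L[ℂ] H) :
    rankOne C a * X * rankOne C a = conjForm C a (X a) • rankOne C a := by
  ext z
  simp only [mul_apply_eq_comp, smul_apply, rankOne_apply, map_smul, smul_smul, mul_comm]

lemma rankOne_mul_self (a : H) : rankOne C a * rankOne C a = conjForm C a a • rankOne C a := by
  simpa using rankOne_mul_mul_rankOne (C := C) a 1

end OuterProducts

section RankOneSymmetric

variable {H : Type*} [NormedAddCommGroup H] [InnerProductSpace ℂ H] [CompleteSpace H]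
  {C : H → H}

lemma star_conjOuter (hC : IsConjugation C) (a b : H) :
    star (conjOuter C a b) = conjOuter C (C b) (C a) := by
  ext z
  refine ext_inner_right ℂ fun y ↦ ?_
  rw [star_eq_adjoint, adjoint_inner_left, conjOuter_apply, conjOuter_apply, inner_smul_right,
    inner_smul_left, conjForm, conjForm, hC.apply_apply, inner_conj_symm, mul_comm]

lemma star_rankOne (hC : IsConjugation C) (a : H) : star (rankOne C a) = rankOne C (C a) :=
  star_conjOuter hC a a

lemma star_symmOuter (hC : IsConjugation C) (a b : H) :
    star (symmOuter C a b) = symmOuter C (C a) (C b) := by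
  rw [symmOuter, star_add, star_conjOuter hC, star_conjOuter hC, symmOuter, add_comm]

lemma rankOne_mem_SC (hC : IsConjugation C) (a : H) : rankOne C a ∈ SC C :=
  (mem_SC_iff hC).2 fun u v ↦ by
    rw [rankOne_apply, rankOne_apply, conjForm_smul_left hC, conjForm_smul_right,
      conjForm_comm hC u a, mul_comm]

lemma symmOuter_mem_SC (hC : IsConjugation C) (a b : H) : symmOuter C a b ∈ SC C :=
  (mem_SC_iff hC).2 fun u v ↦ by
    rw [symmOuter_apply, symmOuter_apply, conjForm_add_left hC, conjForm_add_right,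
      conjForm_smul_left hC, conjForm_smul_left hC, conjForm_smul_right, conjForm_smul_right,
      conjForm_comm hC u a, conjForm_comm hC u b]
    ring

lemma mul_rankOne_mul (hC : IsConjugation C) {G : H →L[ℂ] H} (hG : G ∈ SC C) (y : H) :
    G * rankOne C y * G = rankOne C (G y) := by
  ext z
  simp only [mul_apply_eq_comp, rankOne_apply, map_smul, (mem_SC_iff hC).1 hG]

lemma exists_eq_rankOne (hC : IsConjugation C) {T : H →L[ℂ] H} (hT : T ∈ SC C) (hT0 : T ≠ 0)
    (h : ∀ Z ∈ SC C, ∃ c : ℂ, T * Z * T = c • T) : ∃ a ≠ 0, T = rankOne C a := by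
  obtain ⟨w, hw⟩ : ∃ w, T w ≠ 0 := by
    by_contra! hco
    exact hT0 (ext hco)
  obtain ⟨c, hc⟩ := h (rankOne C w) (rankOne_mem_SC hC w)
  rw [mul_rankOne_mul hC hT] at hc
  have hc0 : c ≠ 0 := by
    rintro rfl
    exact rankOne_ne_zero hC hw (hc.trans (zero_smul ℂ T))
  obtain ⟨μ, hμ⟩ := IsAlgClosed.exists_pow_nat_eq c⁻¹ two_pos
  have hμ0 : μ ≠ 0 := by
    rintro rfl
    exact inv_ne_zero hc0 (by simpa using hμ.symm)
  refine ⟨μ • T w, smul_ne_zero hμ0 hw, ?_⟩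
  rw [rankOne_smul hC, hμ, hc, inv_smul_smul₀ hc0]

end RankOneSymmetric

section Unitary

variable {𝕜 H : Type*} [RCLike 𝕜] [NormedAddCommGroup H] [InnerProductSpace 𝕜 H]
  [CompleteSpace H]

lemma exists_mem_unitary_of_inner_map_map {f : H →ₗ[𝕜] H}
    (hf : ∀ x y, ⟪f x, f y⟫_𝕜 = ⟪x, y⟫_𝕜) (hs : Function.Surjective f) :
    ∃ V ∈ unitary (H →L[𝕜] H), ⇑V = f :=
  ⟨_, (Unitary.linearIsometryEquiv.symm
    (LinearIsometryEquiv.ofSurjective (f.isometryOfInner hf) hs)).prop, rfl⟩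

lemma unitary_star_apply_comm {C : H → H} {V : H →L[𝕜] H} (hV : V ∈ unitary (H →L[𝕜] H))
    (hVC : ∀ x, C (V x) = V (C x)) (x : H) : C (star V x) = star V (C x) := by
  have h₁ : ∀ y, star V (V y) = y := fun y ↦ by
    rw [← mul_apply_eq_comp, Unitary.star_mul_self_of_mem hV, one_apply_eq_self]
  have h₂ : ∀ y, V (star V y) = y := fun y ↦ by
    rw [← mul_apply_eq_comp, Unitary.mul_star_self_of_mem hV, one_apply_eq_self]
  rw [← h₁ (C (star V x)), ← hVC, h₂]

end Unitary

namespace IsJordanAutoOf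

variable {H : Type*} [NormedAddCommGroup H] [InnerProductSpace ℂ H] [CompleteSpace H]
  {C : H → H} {φ : (H →L[ℂ] H) → (H →L[ℂ] H)}

lemma map_mem (hφ : IsJordanAutoOf C φ) {X : H →L[ℂ] H} (hX : X ∈ SC C) : φ X ∈ SC C :=
  hφ.1.1 hX

lemma map_add (hφ : IsJordanAutoOf C φ) {X Y : H →L[ℂ] H} (hX : X ∈ SC C) (hY : Y ∈ SC C) :
    φ (X + Y) = φ X + φ Y := by
  simpa using hφ.2.1 X hX Y hY 1 1

lemma map_smul (hφ : IsJordanAutoOf C φ) {X : H →L[ℂ] H} (hX : X ∈ SC C) (a : ℂ) :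
    φ (a • X) = a • φ X := by
  simpa using hφ.2.1 X hX X hX a 0

lemma map_star (hφ : IsJordanAutoOf C φ) {X : H →L[ℂ] H} (hX : X ∈ SC C) :
    φ (star X) = star (φ X) :=
  hφ.2.2.1 X hX

lemma map_jmul (hφ : IsJordanAutoOf C φ) {X Y : H →L[ℂ] H} (hX : X ∈ SC C) (hY : Y ∈ SC C) :
    φ (jmul X Y) = jmul (φ X) (φ Y) :=
  hφ.2.2.2 X hX Y hY

lemma map_zero (hC : IsConjugation C) (hφ : IsJordanAutoOf C φ) : φ 0 = 0 := by
  simpa using hφ.map_smul (zero_mem_SC hC) 0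

lemma map_ne_zero (hC : IsConjugation C) (hφ : IsJordanAutoOf C φ) {X : H →L[ℂ] H}
    (hX : X ∈ SC C) (hX0 : X ≠ 0) : φ X ≠ 0 := fun h ↦
  hX0 (hφ.1.2.1 hX (zero_mem_SC hC) (h.trans (hφ.map_zero hC).symm))

lemma map_mul_mul (hC : IsConjugation C) (hφ : IsJordanAutoOf C φ) {X Z : H →L[ℂ] H}
    (hX : X ∈ SC C) (hZ : Z ∈ SC C) : φ (X * Z * X) = φ X * φ Z * φ X := by
  have hXZ := jmul_mem_SC hC hX hZ
  have hXX := jmul_mem_SC hC hX hX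
  rw [← two_smul_jmul_jmul_sub, sub_eq_add_neg, ← neg_one_smul ℂ (jmul (jmul X X) Z),
    hφ.2.1 _ (jmul_mem_SC hC hX hXZ) _ (jmul_mem_SC hC hXX hZ), hφ.map_jmul hX hXZ,
    hφ.map_jmul hX hZ, hφ.map_jmul hXX hZ, hφ.map_jmul hX hX, neg_one_smul, ← sub_eq_add_neg,
    two_smul_jmul_jmul_sub]

lemma exists_map_rankOne_eq (hC : IsConjugation C) (hφ : IsJordanAutoOf C φ) {a : H}
    (ha : a ≠ 0) : ∃ b ≠ 0, φ (rankOne C a) = rankOne C b := by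
  have hP := rankOne_mem_SC hC a
  refine exists_eq_rankOne hC (hφ.map_mem hP) (hφ.map_ne_zero hC hP (rankOne_ne_zero hC ha))
    fun Z hZ ↦ ?_
  obtain ⟨W, hW, rfl⟩ := hφ.1.2.2 hZ
  exact ⟨_, by rw [← hφ.map_mul_mul hC hP hW, rankOne_mul_mul_rankOne, hφ.map_smul hP]⟩

lemma exists_rankOne_preimage (hC : IsConjugation C) (hφ : IsJordanAutoOf C φ) {b : H}
    (hb : b ≠ 0) : ∃ a, φ (rankOne C a) = rankOne C b := by
  obtain ⟨X, hX, hXb⟩ := hφ.1.2.2 (rankOne_mem_SC hC b)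
  have hX0 : X ≠ 0 := by
    rintro rfl
    exact rankOne_ne_zero hC hb (hXb.symm.trans (hφ.map_zero hC))
  obtain ⟨a, -, rfl⟩ := exists_eq_rankOne hC hX hX0 fun Z hZ ↦
    ⟨_, hφ.1.2.1 (mul_mul_mem_SC hC hX hZ) (smul_mem_SC hC hX _) <| by
      rw [hφ.map_mul_mul hC hX hZ, hXb, rankOne_mul_mul_rankOne, hφ.map_smul hX, hXb]⟩
  exact ⟨a, hXb⟩

end IsJordanAutoOf

section Converse

variable {H : Type*} [NormedAddCommGroup H] [InnerProductSpace ℂ H] [CompleteSpace H]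
  {C : H → H} {φ : (H →L[ℂ] H) → (H →L[ℂ] H)}

lemma isJordanAutoOf_of_starAlgEquiv (hC : IsConjugation C)
    (ψ : (H →L[ℂ] H) ≃⋆ₐ[ℂ] (H →L[ℂ] H)) (hψ : ∀ X ∈ SC C, ψ X ∈ SC C)
    (hψ' : ∀ X ∈ SC C, ψ.symm X ∈ SC C) (hφ : ∀ X ∈ SC C, φ X = ψ X) :
    IsJordanAutoOf C φ := by
  refine ⟨⟨fun X hX ↦ ?_, fun X hX Y hY h ↦ ?_, fun Y hY ↦ ?_⟩, fun X hX Y hY a b ↦ ?_,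
    fun X hX ↦ ?_, fun X hX Y hY ↦ ?_⟩
  · rw [hφ X hX]; exact hψ X hX
  · rw [hφ X hX, hφ Y hY] at h; exact ψ.injective h
  · exact ⟨ψ.symm Y, hψ' Y hY, by rw [hφ _ (hψ' Y hY), ψ.apply_symm_apply]⟩
  · rw [hφ _ (smul_add_smul_mem_SC hC hX hY a b), hφ X hX, hφ Y hY, map_add, map_smul,
      map_smul]
  · rw [hφ _ (star_mem_SC hC hX), hφ X hX, map_star]
  · rw [hφ _ (jmul_mem_SC hC hX hY), hφ X hX, hφ Y hY, jmul, jmul, map_smul, map_add, map_mul,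
      map_mul]

lemma isJordanAutoOf_conj (hC : IsConjugation C) {V : H →L[ℂ] H}
    (hV : V ∈ unitary (H →L[ℂ] H)) (hVC : ∀ x, C (V x) = V (C x))
    (hφ : ∀ X ∈ SC C, φ X = V * X * star V) : IsJordanAutoOf C φ := by
  have hV' := unitary_star_apply_comm hV hVC
  refine isJordanAutoOf_of_starAlgEquiv hC (Unitary.conjStarAlgAut ℂ _ ⟨V, hV⟩)
    (fun X hX ↦ conj_mem_SC hC hVC hV' hX) (fun X hX ↦ ?_) hφ
  simpa [Unitary.conjStarAlgAut_symm_apply] using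
    conj_mem_SC hC (V := star V) hV' (by simpa using hVC) hX

end Converse

namespace IsJordanAutoOf

variable {H : Type*} [NormedAddCommGroup H] [InnerProductSpace ℂ H] [CompleteSpace H]
  {C : H → H} {φ : (H →L[ℂ] H) → (H →L[ℂ] H)}

/-- The implementing unitary will send `x₀` to `y₀`. -/
structure IsBasePair (C : H → H) (φ : (H →L[ℂ] H) → (H →L[ℂ] H)) (x₀ y₀ : H) : Prop where
  map_left : C x₀ = x₀
  map_right : C y₀ = y₀
  conjForm_left : conjForm C x₀ x₀ = 1
  conjForm_right : conjForm C y₀ y₀ = 1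
  map_rankOne : φ (rankOne C x₀) = rankOne C y₀

lemma exists_isBasePair [Nontrivial H] (hC : IsConjugation C) (hφ : IsJordanAutoOf C φ) :
    ∃ x₀ y₀, IsBasePair C φ x₀ y₀ := by
  obtain ⟨x₀, hx, hx1⟩ := exists_conjForm_self_eq_one hC
  have hP := rankOne_mem_SC hC x₀
  have hx0 : x₀ ≠ 0 := by
    rintro rfl
    simp [conjForm_zero_left hC] at hx1
  obtain ⟨y₀, hy0, hy⟩ := hφ.exists_map_rankOne_eq hC hx0
  have hy1 : conjForm C y₀ y₀ = 1 := by
    refine smul_left_injective ℂ (rankOne_ne_zero hC hy0) ?_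
    simp only
    rw [← rankOne_mul_self, ← hy, one_smul, ← jmul_self, ← hφ.map_jmul hP hP, jmul_self,
      rankOne_mul_self, hx1, one_smul]
  refine ⟨x₀, y₀, hx, ?_, hx1, hy1, hy⟩
  have h : rankOne C y₀ = rankOne C (C y₀) := by
    rw [← star_rankOne hC, ← hy, ← hφ.map_star hP, star_rankOne hC, hx]
  refine (eq_or_eq_neg_of_rankOne_eq hC hy0 h).resolve_right fun hneg ↦ ?_
  rw [conjForm, hneg, inner_neg_left, neg_eq_iff_eq_neg] at hy1
  have := inner_self_nonneg (𝕜 := ℂ) (x := y₀)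
  rw [hy1] at this
  norm_num at this

/-- If `φ = V (·) V*` with `V x₀ = y₀`, then `φ (u ⊗ x₀ + x₀ ⊗ u) y₀ = V u + [u, x₀] y₀`. -/
noncomputable def transport (hC : IsConjugation C) (hφ : IsJordanAutoOf C φ) (x₀ y₀ : H) :
    H →ₗ[ℂ] H where
  toFun u := φ (symmOuter C u x₀) y₀ - conjForm C u x₀ • y₀
  map_add' u v := by
    rw [symmOuter_add_left hC, hφ.map_add (symmOuter_mem_SC hC u x₀) (symmOuter_mem_SC hC v x₀),
      add_apply, conjForm_add_left hC, add_smul]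
    abel
  map_smul' c u := by
    rw [symmOuter_smul_left hC, hφ.map_smul (symmOuter_mem_SC hC u x₀), smul_apply,
      conjForm_smul_left hC, mul_smul, RingHom.id_apply, smul_sub]

lemma transport_apply (hC : IsConjugation C) (hφ : IsJordanAutoOf C φ) (x₀ y₀ u : H) :
    hφ.transport hC x₀ y₀ u = φ (symmOuter C u x₀) y₀ - conjForm C u x₀ • y₀ := rfl

variable {x₀ y₀ : H}

lemma transport_left (hC : IsConjugation C) (hφ : IsJordanAutoOf C φ)
    (hb : IsBasePair C φ x₀ y₀) : hφ.transport hC x₀ y₀ x₀ = y₀ := by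
  rw [transport_apply, symmOuter_self, hφ.map_smul (rankOne_mem_SC hC x₀), hb.map_rankOne,
    smul_apply, rankOne_apply, hb.conjForm_left, hb.conjForm_right]
  module

lemma map_rankOne (hC : IsConjugation C) (hφ : IsJordanAutoOf C φ)
    (hb : IsBasePair C φ x₀ y₀) (w : H) :
    φ (rankOne C w) = rankOne C (hφ.transport hC x₀ y₀ w) := by
  -- `(u ⊗ x₀ + x₀ ⊗ u) (x₀ ⊗ x₀) (u ⊗ x₀ + x₀ ⊗ u) = v ⊗ v` with `v = u + [u, x₀] x₀`,
  -- and every vector is such a `v`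
  have key : ∀ u, φ (rankOne C (u + conjForm C u x₀ • x₀)) =
      rankOne C (hφ.transport hC x₀ y₀ (u + conjForm C u x₀ • x₀)) := fun u ↦ by
    have hS := symmOuter_mem_SC hC u x₀
    rw [_root_.map_add, _root_.map_smul, transport_left hC hφ hb, transport_apply, sub_add_cancel,
      ← mul_rankOne_mul hC (hφ.map_mem hS), ← hb.map_rankOne,
      ← hφ.map_mul_mul hC hS (rankOne_mem_SC hC x₀), mul_rankOne_mul hC hS, symmOuter_apply,
      hb.conjForm_left, one_smul]
  obtain ⟨u, rfl⟩ : ∃ u, u + conjForm C u x₀ • x₀ = w :=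
    ⟨w - (conjForm C w x₀ / 2) • x₀, by
      rw [conjForm_sub_left hC, conjForm_smul_left hC, hb.conjForm_left]
      module⟩
  exact key u

lemma rankOne_transport_ne_zero (hC : IsConjugation C) (hφ : IsJordanAutoOf C φ)
    (hb : IsBasePair C φ x₀ y₀) {u : H} (hu : u ≠ 0) :
    rankOne C (hφ.transport hC x₀ y₀ u) ≠ 0 := by
  rw [← hφ.map_rankOne hC hb]
  exact hφ.map_ne_zero hC (rankOne_mem_SC hC u) (rankOne_ne_zero hC hu)

lemma conjForm_map_apply_transport (hC : IsConjugation C) (hφ : IsJordanAutoOf C φ)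
    (hb : IsBasePair C φ x₀ y₀) {X : H →L[ℂ] H} (hX : X ∈ SC C) (u : H) :
    conjForm C (hφ.transport hC x₀ y₀ u) (φ X (hφ.transport hC x₀ y₀ u)) =
      conjForm C u (X u) := by
  rcases eq_or_ne u 0 with rfl | hu
  · simp only [_root_.map_zero, conjForm_zero_left hC]
  have hP := rankOne_mem_SC hC u
  refine smul_left_injective ℂ (rankOne_transport_ne_zero hC hφ hb hu) ?_
  simp only
  rw [← rankOne_mul_mul_rankOne, ← hφ.map_rankOne hC hb, ← hφ.map_mul_mul hC hP hX,
    rankOne_mul_mul_rankOne, hφ.map_smul hP]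

lemma conjForm_transport (hC : IsConjugation C) (hφ : IsJordanAutoOf C φ)
    (hb : IsBasePair C φ x₀ y₀) (u v : H) :
    conjForm C (hφ.transport hC x₀ y₀ u) (hφ.transport hC x₀ y₀ v) = conjForm C u v := by
  have diag : ∀ a, conjForm C (hφ.transport hC x₀ y₀ a) (hφ.transport hC x₀ y₀ a) =
      conjForm C a a := fun a ↦ by
    rcases eq_or_ne a 0 with rfl | ha
    · simp only [_root_.map_zero]
    have hP := rankOne_mem_SC hC a
    refine smul_left_injective ℂ (rankOne_transport_ne_zero hC hφ hb ha) ?_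
    simp only
    rw [← rankOne_mul_self, ← hφ.map_rankOne hC hb, ← jmul_self, ← hφ.map_jmul hP hP, jmul_self,
      rankOne_mul_self, hφ.map_smul hP, hφ.map_rankOne hC hb]
  have := diag (u + v)
  rw [_root_.map_add, conjForm_add_left hC, conjForm_add_right, conjForm_add_right,
    conjForm_add_left hC, conjForm_add_right, conjForm_add_right, diag u, diag v,
    conjForm_comm hC v u, conjForm_comm hC (hφ.transport hC x₀ y₀ v)] at this
  linear_combination this / 2

lemma map_transport (hC : IsConjugation C) (hφ : IsJordanAutoOf C φ)
    (hb : IsBasePair C φ x₀ y₀) (u : H) :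
    C (hφ.transport hC x₀ y₀ u) = hφ.transport hC x₀ y₀ (C u) := by
  have hS := symmOuter_mem_SC hC u x₀
  rw [transport_apply, transport_apply, hC.map_sub, hC.map_smul, SC_map_apply hC (hφ.map_mem hS),
    ← hφ.map_star hS, star_symmOuter hC, ← conjForm_map_map hC, hb.map_left, hb.map_right]

lemma inner_transport (hC : IsConjugation C) (hφ : IsJordanAutoOf C φ)
    (hb : IsBasePair C φ x₀ y₀) (u v : H) :
    ⟪hφ.transport hC x₀ y₀ u, hφ.transport hC x₀ y₀ v⟫_ℂ = ⟪u, v⟫_ℂ := by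
  calc ⟪hφ.transport hC x₀ y₀ u, hφ.transport hC x₀ y₀ v⟫_ℂ
      = conjForm C (C (hφ.transport hC x₀ y₀ u)) (hφ.transport hC x₀ y₀ v) := by
        rw [conjForm, hC.apply_apply]
    _ = conjForm C (C u) v := by rw [map_transport hC hφ hb, conjForm_transport hC hφ hb]
    _ = ⟪u, v⟫_ℂ := by rw [conjForm, hC.apply_apply]

lemma transport_surjective (hC : IsConjugation C) (hφ : IsJordanAutoOf C φ)
    (hb : IsBasePair C φ x₀ y₀) : Function.Surjective (hφ.transport hC x₀ y₀) := by
  intro w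
  rcases eq_or_ne w 0 with rfl | hw
  · exact ⟨0, _root_.map_zero _⟩
  obtain ⟨a, ha⟩ := hφ.exists_rankOne_preimage hC hw
  rw [hφ.map_rankOne hC hb] at ha
  rcases eq_or_eq_neg_of_rankOne_eq hC hw ha.symm with h | h
  · exact ⟨a, h⟩
  · exact ⟨-a, by rw [_root_.map_neg, h, neg_neg]⟩

theorem exists_unitary_conj [Nontrivial H] (hC : IsConjugation C) (hφ : IsJordanAutoOf C φ) :
    ∃ V : H →L[ℂ] H, V ∈ unitary (H →L[ℂ] H) ∧ (∀ x, C (V x) = V (C x)) ∧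
      ∀ X ∈ SC C, φ X = V * X * star V := by
  obtain ⟨x₀, y₀, hb⟩ := exists_isBasePair hC hφ
  obtain ⟨V, hV, hVT⟩ := exists_mem_unitary_of_inner_map_map (inner_transport hC hφ hb)
    (transport_surjective hC hφ hb)
  have hVC : ∀ x, C (V x) = V (C x) := by simpa only [hVT] using map_transport hC hφ hb
  refine ⟨V, hV, hVC, fun X hX ↦ sub_eq_zero.1 ?_⟩
  refine eq_zero_of_conjForm_apply_self hC
    (sub_mem_SC hC (hφ.map_mem hX) (conj_mem_SC hC hVC (unitary_star_apply_comm hV hVC) hX))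
    fun w ↦ ?_
  obtain ⟨u, rfl⟩ := (transport_surjective hC hφ hb) w
  have hVV : star V (V u) = u := by
    rw [← mul_apply_eq_comp, Unitary.star_mul_self_of_mem hV, one_apply_eq_self]
  rw [sub_apply, conjForm_sub_right, mul_apply_eq_comp, mul_apply_eq_comp, ← hVT, hVV, hVT,
    conjForm_map_apply_transport hC hφ hb hX, conjForm_transport hC hφ hb, sub_self]

end IsJordanAutoOf

theorem stmt9_general {H : Type*} [NormedAddCommGroup H] [InnerProductSpace ℂ H] [CompleteSpace H]
    (C : H → H) (hC : IsConjugation C) (φ : (H →L[ℂ] H) → (H →L[ℂ] H)) :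
    IsJordanAutoOf C φ ↔
      ∃ V : H →L[ℂ] H, V ∈ unitary (H →L[ℂ] H) ∧
        (∀ x : H, C (V x) = V (C x)) ∧
        ∀ X ∈ SC C, φ X = V * X * star V := by
  refine ⟨fun hφ ↦ ?_, fun ⟨V, hV, hVC, hφV⟩ ↦ isJordanAutoOf_conj hC hV hVC hφV⟩
  rcases subsingleton_or_nontrivial H with hH | hH
  · exact ⟨1, one_mem _, fun _ ↦ Subsingleton.elim _ _, fun _ _ ↦ Subsingleton.elim _ _⟩
  · exact hφ.exists_unitary_conj hC

/-- `φ` is a Jordan automorphism of `S_C` iff `φ(X) = V X V*` on `S_C` for some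
unitary `V` commuting with `C`. -/
theorem stmt9 {H : Type*} [NormedAddCommGroup H] [InnerProductSpace ℂ H] [CompleteSpace H]
    [TopologicalSpace.SeparableSpace H] (hdim : ¬ FiniteDimensional ℂ H)
    (C : H → H) (hC : IsConjugation C) (φ : (H →L[ℂ] H) → (H →L[ℂ] H)) :
    IsJordanAutoOf C φ ↔
      ∃ V : H →L[ℂ] H, V ∈ unitary (H →L[ℂ] H) ∧
        (∀ x : H, C (V x) = V (C x)) ∧
        ∀ X ∈ SC C, φ X = V * X * star V :=
  stmt9_general C hC φ
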